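/- Let β > 1 be a real number. The (−β)-shift S_{−β} is a subshift of finite type if and only if d_{−β}(−β/(β+1)) is purely periodic. -/

import Mathlib

/-- The (-β)-transformation `T_{-β}(x) = -βx - ⌊-βx + β/(β+1)⌋`. -/
noncomputable def negBetaT (β : ℝ) (x : ℝ) : ℝ :=
  -β * x - ⌊-β * x + β / (β + 1)⌋

/-- The digits of the (-β)-expansion: `negBetaDigit β x n` is the digit
`x_{n+1} = ⌊-β T_{-β}^n(x) + β/(β+1)⌋`. -/
noncomputable def negBetaDigit (β : ℝ) (x : ℝ) (n : ℕ) : ℤ :=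
  ⌊-β * (negBetaT β)^[n] x + β / (β + 1)⌋

/-- The word `d = d_{-β}(-β/(β+1))`. -/
noncomputable def dmb (β : ℝ) : ℕ → ℤ := negBetaDigit β (-β / (β + 1))

/-- Strict alternate order on one-sided infinite words (index `k` holds the letter at
position `k+1`, whence the sign `(-1)^(k+1)`). -/
def AltLt (u v : ℕ → ℤ) : Prop :=
  ∃ k : ℕ, (∀ i < k, u i = v i) ∧ (-1 : ℤ) ^ (k + 1) * (u k - v k) < 0

/-- Non-strict alternate order. -/
def AltLe (u v : ℕ → ℤ) : Prop := u = v ∨ AltLt u v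

/-- The one-sided word read in the bi-infinite word `w` from position `n` on. -/
def shiftSeq (w : ℤ → ℤ) (n : ℤ) : ℕ → ℤ := fun i => w (n + i)

open scoped Classical

/-- The word `d* = d*_{-β}(1/(β+1))`: if `d = (d_1 ⋯ d_{2p+1})^ω` is purely periodic with
(minimal) odd period `2p+1`, then `d* = (0 d_1 ⋯ d_{2p} (d_{2p+1}-1))^ω`; otherwise
`d* = 0d`. -/
noncomputable def dstar (β : ℝ) : ℕ → ℤ :=
  if h : ∃ p : ℕ, 0 < p ∧ Odd p ∧ ∀ i, dmb β (i + p) = dmb β i then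
    fun n =>
      let p := Nat.find h
      let r := n % (p + 1)
      if r = 0 then 0 else if r = p then dmb β (p - 1) - 1 else dmb β (r - 1)
  else fun n => if n = 0 then 0 else dmb β (n - 1)

/-- The (-β)-shift: all bi-infinite words over `A_{-β} = {0,…,⌊β⌋}` all of whose shifts
lie alternately between `d` and `d*`. -/
def negBetaShift (β : ℝ) : Set (ℤ → ℤ) :=
  {w | (∀ i, 0 ≤ w i ∧ w i ≤ ⌊β⌋) ∧
    ∀ n : ℤ, AltLe (dmb β) (shiftSeq w n) ∧ AltLe (shiftSeq w n) (dstar β)}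

/-- `u` is a factor of the bi-infinite word `w`. -/
def IsFactorOf (u : List ℤ) (w : ℤ → ℤ) : Prop :=
  ∃ n : ℤ, ∀ i : ℕ, i < u.length → u.getD i 0 = w (n + i)

/-!
If `d` has period `p`, then `d` has the even period `2p`, and `d*` is either periodic with an
even period (when `d` has an odd period) or equal to `0d`, in which case the upper bound
`w ⪯ d*` follows from the lower bound. Shifting by an even number of letters preserves the
alternate order, so a violation of a bound given by a word of even period `q` can be pushed
to one whose first difference occurs before position `q`: the finitely many words of length
at most `q` that witness such a violation form a set of forbidden words.

Conversely, if `d` is not periodic, the orbit of `-β/(β+1)` never meets a discontinuity of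
`T_{-β}`, so the first `N` digits are locally constant around `z = T_{-β}^K(-β/(β+1))`.
Replacing the tail of `0^∞ d` after `d_1 ⋯ d_K` by the expansion of a point slightly larger
than `z` keeps every factor of length `N` admissible, but for odd `K` makes the word
alternately smaller than `d`.
-/

open Filter Topology

def AltLtAt (u v : ℕ → ℤ) (k : ℕ) : Prop :=
  (∀ i < k, u i = v i) ∧ (-1 : ℤ) ^ (k + 1) * (u k - v k) < 0

theorem altLt_iff_exists_altLtAt {u v : ℕ → ℤ} : AltLt u v ↔ ∃ k, AltLtAt u v k := Iff.rfl

section AltOrder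

variable {u v : ℕ → ℤ} {k q : ℕ}

theorem AltLtAt.ne (h : AltLtAt u v k) : u k ≠ v k := fun heq => by
  simpa [heq] using h.2

theorem AltLtAt.index_eq (h : AltLtAt u v k) {k' : ℕ} (hpre : ∀ i < k', u i = v i)
    (hne : u k' ≠ v k') : k = k' := by
  rcases lt_trichotomy k k' with hlt | heq | hgt
  · exact absurd (hpre k hlt) h.ne
  · exact heq
  · exact absurd (h.1 k' hgt) hne

theorem AltLtAt.not_altLtAt (h : AltLtAt u v k) {k' : ℕ} : ¬ AltLtAt v u k' := fun h' => by
  obtain rfl := h'.index_eq (fun i hi => (h.1 i hi).symm) h.ne.symm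
  linarith [h.2, h'.2]

theorem exists_first_diff (h : u ≠ v) : ∃ k, (∀ i < k, u i = v i) ∧ u k ≠ v k := by
  have hex : ∃ i, u i ≠ v i := Function.ne_iff.mp h
  exact ⟨Nat.find hex, fun i hi => not_not.mp (Nat.find_min hex hi), Nat.find_spec hex⟩

theorem altLtAt_or_altLtAt (hpre : ∀ i < k, u i = v i) (hne : u k ≠ v k) :
    AltLtAt u v k ∨ AltLtAt v u k := by
  have hsign : (-1 : ℤ) ^ (k + 1) * (u k - v k) ≠ 0 :=
    mul_ne_zero (pow_ne_zero _ (by norm_num)) (sub_ne_zero.mpr hne)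
  rcases hsign.lt_or_gt with h | h
  · exact Or.inl ⟨hpre, h⟩
  · exact Or.inr ⟨fun i hi => (hpre i hi).symm, by linarith⟩

theorem altLe_iff_not_altLt : AltLe u v ↔ ¬ AltLt v u := by
  constructor
  · rintro (rfl | ⟨k, hk⟩) ⟨k', hk'⟩
    · exact AltLtAt.ne hk' rfl
    · exact AltLtAt.not_altLtAt hk hk'
  · intro h
    by_cases huv : u = v
    · exact Or.inl huv
    obtain ⟨k, hpre, hne⟩ := exists_first_diff huv
    exact Or.inr ⟨k, (altLtAt_or_altLtAt hpre hne).resolve_right fun h' => h ⟨k, h'⟩⟩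

theorem altLtAt_add_iff : AltLtAt u v (k + q) ↔ (∀ i < q, u i = v i) ∧
    (∀ i < k, u (i + q) = v (i + q)) ∧
      (-1 : ℤ) ^ q * ((-1 : ℤ) ^ (k + 1) * (u (k + q) - v (k + q))) < 0 := by
  have hsign : (-1 : ℤ) ^ (k + q + 1) * (u (k + q) - v (k + q))
      = (-1) ^ q * ((-1) ^ (k + 1) * (u (k + q) - v (k + q))) := by ring
  rw [AltLtAt, hsign]
  constructor
  · rintro ⟨hpre, hs⟩
    exact ⟨fun i hi => hpre i (by omega), fun i hi => hpre _ (by omega), hs⟩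
  · rintro ⟨hlow, hhigh, hs⟩
    refine ⟨fun i hi => ?_, hs⟩
    rcases lt_or_ge i q with h | h
    · exact hlow i h
    · simpa [Nat.sub_add_cancel h] using hhigh (i - q) (by omega)

theorem altLtAt_add_iff_of_even (hq : Even q) : AltLtAt u v (k + q) ↔
    (∀ i < q, u i = v i) ∧ AltLtAt (fun i => u (i + q)) (fun i => v (i + q)) k := by
  rw [altLtAt_add_iff, hq.neg_one_pow, one_mul]
  rfl

theorem altLtAt_add_iff_of_odd (hq : Odd q) : AltLtAt u v (k + q) ↔
    (∀ i < q, u i = v i) ∧ AltLtAt (fun i => v (i + q)) (fun i => u (i + q)) k := by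
  rw [altLtAt_add_iff, hq.neg_one_pow, AltLtAt]
  refine and_congr_right fun _ => and_congr (forall₂_congr fun _ _ => eq_comm) ?_
  constructor <;> intro h <;> linarith

theorem exists_altLtAt_lt_of_even (a c : ℤ → ℕ → ℤ) (hq : Even q) (hq0 : 0 < q)
    (ha : ∀ n i, a n (i + q) = a (n + q) i) (hc : ∀ n i, c n (i + q) = c (n + q) i) {n : ℤ}
    (h : AltLtAt (a n) (c n) k) : ∃ n', ∃ k' < q, AltLtAt (a n') (c n') k' := by
  induction k using Nat.strong_induction_on generalizing n with
  | _ k ih =>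
    rcases lt_or_ge k q with hk | hk
    · exact ⟨n, k, hk, h⟩
    obtain ⟨j, rfl⟩ := Nat.exists_eq_add_of_le' hk
    have hj := ((altLtAt_add_iff_of_even hq).mp h).2
    simp only [ha, hc] at hj
    exact ih j (by omega) hj

end AltOrder

def fullShift (b : ℤ) : Set (ℤ → ℤ) := {w | ∀ i, 0 ≤ w i ∧ w i ≤ b}

def IsSubshiftOfFiniteType (b : ℤ) (S : Set (ℤ → ℤ)) : Prop :=
  ∃ X : Finset (List ℤ), S = fullShift b ∩ {w | ∀ u ∈ X, ¬ IsFactorOf u w}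

theorem IsSubshiftOfFiniteType.inter {b : ℤ} {A B : Set (ℤ → ℤ)}
    (hA : IsSubshiftOfFiniteType b (fullShift b ∩ A))
    (hB : IsSubshiftOfFiniteType b (fullShift b ∩ B)) :
    IsSubshiftOfFiniteType b (fullShift b ∩ A ∩ B) := by
  obtain ⟨X, hX⟩ := hA
  obtain ⟨Y, hY⟩ := hB
  refine ⟨X ∪ Y, Set.ext fun w => ?_⟩
  have hXw := Set.ext_iff.mp hX w
  have hYw := Set.ext_iff.mp hY w
  simp only [Set.mem_inter_iff, Set.mem_ofPred_eq] at hXw hYw ⊢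
  simp only [Finset.mem_union, or_imp, forall_and]
  tauto

theorem mem_of_eq_left_of_eq_right {b : ℤ} {S : Set (ℤ → ℤ)} {X : Finset (List ℤ)}
    (hS : S = fullShift b ∩ {w | ∀ u ∈ X, ¬ IsFactorOf u w}) {N : ℕ}
    (hX : ∀ u ∈ X, u.length ≤ N) {w w₁ w₂ : ℤ → ℤ} (h₁ : w₁ ∈ S) (h₂ : w₂ ∈ S) (a : ℤ)
    (hw₁ : ∀ n < a + N, w n = w₁ n) (hw₂ : ∀ n ≥ a, w n = w₂ (n - a)) : w ∈ S := by
  rw [hS] at h₁ h₂ ⊢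
  refine ⟨fun n => ?_, fun u hu ⟨m, hm⟩ => ?_⟩
  · rcases lt_or_ge n a with hn | hn
    · rw [hw₁ n (by omega)]; exact h₁.1 n
    · rw [hw₂ n hn]; exact h₂.1 _
  · have hlen := hX u hu
    rcases lt_or_ge m a with hma | hma
    · refine h₁.2 u hu ⟨m, fun i hi => ?_⟩
      rw [hm i hi, hw₁ _ (by omega)]
    · refine h₂.2 u hu ⟨m - a, fun i hi => ?_⟩
      rw [hm i hi, hw₂ _ (by omega), sub_add_eq_add_sub]

theorem shiftSeq_add (w : ℤ → ℤ) (n : ℤ) (i q : ℕ) :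
    shiftSeq w n (i + q) = shiftSeq w (n + q) i := by
  simp only [shiftSeq]; push_cast; ring_nf

def prefixWord (v : ℕ → ℤ) (k : ℕ) (c : ℤ) : List ℤ :=
  List.ofFn (fun i : Fin k => v i) ++ [c]

theorem prefixWord_getD_of_lt {v : ℕ → ℤ} {k i : ℕ} (c : ℤ) (hi : i < k) :
    (prefixWord v k c).getD i 0 = v i := by
  simp [prefixWord, List.getD_eq_getElem?_getD, List.getElem?_append_left, hi]

theorem prefixWord_getD_self (v : ℕ → ℤ) (k : ℕ) (c : ℤ) : (prefixWord v k c).getD k 0 = c := by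
  simp [prefixWord, List.getD_eq_getElem?_getD]

theorem isFactorOf_prefixWord_iff {v : ℕ → ℤ} {k : ℕ} {c : ℤ} {w : ℤ → ℤ} :
    IsFactorOf (prefixWord v k c) w ↔
      ∃ n, (∀ i < k, shiftSeq w n i = v i) ∧ shiftSeq w n k = c := by
  have hlen : (prefixWord v k c).length = k + 1 := by simp [prefixWord]
  simp only [IsFactorOf, hlen, shiftSeq]
  refine exists_congr fun n => ⟨fun h => ⟨fun i hi => ?_, ?_⟩, fun ⟨hlt, heq⟩ i hi => ?_⟩
  · rw [← h i (by omega), prefixWord_getD_of_lt c hi]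
  · rw [← h k (by omega), prefixWord_getD_self]
  · rcases Nat.lt_or_ge i k with h | h
    · rw [prefixWord_getD_of_lt c h, hlt i h]
    · obtain rfl : i = k := by omega
      rw [prefixWord_getD_self, heq]

noncomputable def witnessWords (b : ℤ) (q : ℕ) (v : ℕ → ℤ) (R : ℕ → ℤ → Prop) : Finset (List ℤ) :=
  ((Finset.range q ×ˢ Finset.Icc 0 b).filter fun kc => R kc.1 kc.2).image
    fun kc => prefixWord v kc.1 kc.2

theorem exists_mem_witnessWords_isFactorOf_iff {b : ℤ} {q : ℕ} {v : ℕ → ℤ}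
    {R : ℕ → ℤ → Prop} {w : ℤ → ℤ} (hw : w ∈ fullShift b) :
    (∃ u ∈ witnessWords b q v R, IsFactorOf u w) ↔
      ∃ n, ∃ k < q, (∀ i < k, shiftSeq w n i = v i) ∧ R k (shiftSeq w n k) := by
  simp only [witnessWords, Finset.mem_image, Finset.mem_filter, Finset.mem_product,
    Finset.mem_range, Finset.mem_Icc]
  constructor
  · rintro ⟨_, ⟨⟨k, c⟩, ⟨⟨hk, -⟩, hR⟩, rfl⟩, hfac⟩
    obtain ⟨n, hpre, hc⟩ := isFactorOf_prefixWord_iff.mp hfac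
    exact ⟨n, k, hk, hpre, hc ▸ hR⟩
  · rintro ⟨n, k, hk, hpre, hR⟩
    exact ⟨_, ⟨(k, shiftSeq w n k), ⟨⟨hk, hw _⟩, hR⟩, rfl⟩,
      isFactorOf_prefixWord_iff.mpr ⟨n, hpre, rfl⟩⟩

theorem isSubshiftOfFiniteType_of_notMem_iff {b : ℤ} {A : Set (ℤ → ℤ)} (q : ℕ) (v : ℕ → ℤ)
    (R : ℕ → ℤ → Prop) (hA : ∀ w ∈ fullShift b, w ∉ A ↔
      ∃ n, ∃ k < q, (∀ i < k, shiftSeq w n i = v i) ∧ R k (shiftSeq w n k)) :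
    IsSubshiftOfFiniteType b (fullShift b ∩ A) := by
  refine ⟨witnessWords b q v R, Set.ext fun w => and_congr_right fun hw => ?_⟩
  rw [← not_iff_not, hA w hw, ← exists_mem_witnessWords_isFactorOf_iff hw]
  simp only [Set.mem_ofPred_eq, not_forall, not_not, exists_prop]

section PeriodicBound

variable {b : ℤ} {v : ℕ → ℤ} {q : ℕ}

theorem isSubshiftOfFiniteType_altLe_left (hq : Even q) (hq0 : 0 < q)
    (hv : Function.Periodic v q) :
    IsSubshiftOfFiniteType b (fullShift b ∩ {w | ∀ n, AltLe v (shiftSeq w n)}) := by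
  refine isSubshiftOfFiniteType_of_notMem_iff q v
    (fun k c => (-1 : ℤ) ^ (k + 1) * (c - v k) < 0) fun w _ => ?_
  simp only [Set.mem_ofPred_eq, altLe_iff_not_altLt, not_forall, not_not,
    altLt_iff_exists_altLtAt]
  exact ⟨fun ⟨_, _, h⟩ => exists_altLtAt_lt_of_even _ (fun _ => v) hq hq0
    (fun n i => shiftSeq_add w n i q) (fun _ i => hv i) h, fun ⟨n, k, _, h⟩ => ⟨n, k, h⟩⟩

theorem isSubshiftOfFiniteType_altLe_right (hq : Even q) (hq0 : 0 < q)
    (hv : Function.Periodic v q) :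
    IsSubshiftOfFiniteType b (fullShift b ∩ {w | ∀ n, AltLe (shiftSeq w n) v}) := by
  refine isSubshiftOfFiniteType_of_notMem_iff q v
    (fun k c => (-1 : ℤ) ^ (k + 1) * (v k - c) < 0) fun w _ => ?_
  simp only [Set.mem_ofPred_eq, altLe_iff_not_altLt, not_forall, not_not,
    altLt_iff_exists_altLtAt]
  constructor
  · rintro ⟨_, _, h⟩
    obtain ⟨n, k, hk, hpre, hsign⟩ := exists_altLtAt_lt_of_even (fun _ => v) _ hq hq0
      (fun _ i => hv i) (fun n i => shiftSeq_add w n i q) h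
    exact ⟨n, k, hk, fun i hi => (hpre i hi).symm, hsign⟩
  · rintro ⟨n, k, -, hpre, hsign⟩
    exact ⟨n, k, fun i hi => (hpre i hi).symm, hsign⟩

end PeriodicBound

def negBetaInterval (β : ℝ) : Set ℝ := Set.Ico (-β / (β + 1)) (1 / (β + 1))

section Transformation

variable {β x y : ℝ}

theorem negBetaT_eq_fract (β x : ℝ) :
    negBetaT β x = Int.fract (-β * x + β / (β + 1)) - β / (β + 1) := by
  rw [negBetaT, Int.fract]; ring

theorem negBetaT_mem (hβ : β + 1 ≠ 0) (x : ℝ) : negBetaT β x ∈ negBetaInterval β := by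
  have hup : 1 / (β + 1) = 1 - β / (β + 1) := by field_simp; ring
  rw [negBetaT_eq_fract, negBetaInterval, hup, neg_div]
  exact ⟨by linarith [Int.fract_nonneg (-β * x + β / (β + 1))],
    by linarith [Int.fract_lt_one (-β * x + β / (β + 1))]⟩

theorem iterate_negBetaT_mem (hβ : β + 1 ≠ 0) (hx : x ∈ negBetaInterval β) (n : ℕ) :
    (negBetaT β)^[n] x ∈ negBetaInterval β := by
  cases n with
  | zero => exact hx
  | succ n => rw [Function.iterate_succ_apply']; exact negBetaT_mem hβ _

theorem negBetaDigit_nonneg_and_le_floor (hβ : 0 < β) (hx : x ∈ negBetaInterval β) (n : ℕ) :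
    0 ≤ negBetaDigit β x n ∧ negBetaDigit β x n ≤ ⌊β⌋ := by
  obtain ⟨hlow, hup⟩ := iterate_negBetaT_mem (by positivity) hx n
  set t := (negBetaT β)^[n] x
  have hβ1 : 0 < β + 1 := by linarith
  rw [div_le_iff₀ hβ1] at hlow
  rw [lt_div_iff₀ hβ1] at hup
  have hc : β / (β + 1) * (β + 1) = β := div_mul_cancel₀ β hβ1.ne'
  refine ⟨Int.floor_nonneg.mpr ?_, Int.floor_mono ?_⟩ <;> nlinarith

theorem negBetaDigit_add (β x : ℝ) (i m : ℕ) :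
    negBetaDigit β x (i + m) = negBetaDigit β ((negBetaT β)^[m] x) i := by
  rw [negBetaDigit, negBetaDigit, Function.iterate_add_apply]

theorem iterate_succ_negBetaT (β x : ℝ) (n : ℕ) :
    (negBetaT β)^[n + 1] x = -β * (negBetaT β)^[n] x - negBetaDigit β x n := by
  rw [Function.iterate_succ_apply', negBetaT, negBetaDigit]

theorem iterate_negBetaT_sub_iterate {n : ℕ}
    (h : ∀ i < n, negBetaDigit β x i = negBetaDigit β y i) :
    (negBetaT β)^[n] x - (negBetaT β)^[n] y = (-β) ^ n * (x - y) := by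
  induction n with
  | zero => simp
  | succ n ih =>
    rw [iterate_succ_negBetaT, iterate_succ_negBetaT, h n n.lt_succ_self, pow_succ,
      mul_comm _ (-β), mul_assoc, ← ih fun i hi => h i (by omega)]
    ring

theorem eq_of_negBetaDigit_eq (hβ : 1 < β) (hx : x ∈ negBetaInterval β)
    (hy : y ∈ negBetaInterval β) (h : negBetaDigit β x = negBetaDigit β y) : x = y := by
  by_contra hne
  have hxy : 0 < |x - y| := abs_pos.mpr (sub_ne_zero.mpr hne)
  obtain ⟨n, hn⟩ := pow_unbounded_of_one_lt (1 / |x - y|) hβ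
  rw [div_lt_iff₀ hxy] at hn
  have hlen : 1 / (β + 1) = -β / (β + 1) + 1 := by field_simp; ring
  obtain ⟨hx₁, hx₂⟩ := iterate_negBetaT_mem (by positivity) hx n
  obtain ⟨hy₁, hy₂⟩ := iterate_negBetaT_mem (by positivity) hy n
  have hclose : |(negBetaT β)^[n] x - (negBetaT β)^[n] y| < 1 := by
    rw [abs_sub_lt_iff]; constructor <;> linarith
  rw [iterate_negBetaT_sub_iterate fun i _ => congrFun h i, abs_mul, abs_pow, abs_neg,
    abs_of_pos (by linarith)] at hclose
  linarith

theorem negBetaDigit_le_of_iterate_le (hβ : 0 ≤ β) {k : ℕ}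
    (h : (negBetaT β)^[k] x ≤ (negBetaT β)^[k] y) :
    negBetaDigit β y k ≤ negBetaDigit β x k :=
  Int.floor_mono (by nlinarith)

theorem negBetaDigit_altLtAt (hβ : 0 ≤ β) (hxy : x ≤ y) {k : ℕ}
    (hpre : ∀ i < k, negBetaDigit β x i = negBetaDigit β y i)
    (hne : negBetaDigit β x k ≠ negBetaDigit β y k) :
    AltLtAt (negBetaDigit β x) (negBetaDigit β y) k := by
  refine ⟨hpre, ?_⟩
  have hsub := iterate_negBetaT_sub_iterate hpre
  have hβk : 0 ≤ β ^ k := pow_nonneg hβ k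
  rcases Nat.even_or_odd k with hk | hk
  · rw [hk.neg_pow] at hsub
    have := negBetaDigit_le_of_iterate_le hβ (x := x) (y := y) (by nlinarith)
    rw [hk.add_one.neg_one_pow]
    omega
  · rw [hk.neg_pow] at hsub
    have := negBetaDigit_le_of_iterate_le hβ (x := y) (y := x) (by nlinarith)
    rw [hk.add_one.neg_one_pow]
    omega

theorem exists_altLtAt_negBetaDigit_of_lt (hβ : 1 < β) (hx : x ∈ negBetaInterval β)
    (hy : y ∈ negBetaInterval β) (hxy : x < y) :
    ∃ k, AltLtAt (negBetaDigit β x) (negBetaDigit β y) k := by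
  obtain ⟨k, hpre, hk⟩ :=
    exists_first_diff fun h => hxy.ne (eq_of_negBetaDigit_eq hβ hx hy h)
  exact ⟨k, negBetaDigit_altLtAt (by linarith) hxy.le hpre hk⟩

theorem dmb_altLe_negBetaDigit (hβ : 1 < β) (hx : x ∈ negBetaInterval β) :
    AltLe (dmb β) (negBetaDigit β x) := by
  rcases hx.1.eq_or_lt with heq | hlt
  · exact Or.inl (by rw [dmb, heq])
  · have hβ1 : 0 < β + 1 := by linarith
    have hmem : -β / (β + 1) ∈ negBetaInterval β :=
      ⟨le_rfl, div_lt_div_of_pos_right (by linarith) hβ1⟩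
    exact Or.inr (exists_altLtAt_negBetaDigit_of_lt hβ hmem hx hlt)

theorem dmb_zero (hβ : β + 1 ≠ 0) : dmb β 0 = ⌊β⌋ := by
  rw [dmb, negBetaDigit, Function.iterate_zero_apply]
  congr 1
  field_simp

end Transformation

theorem eventually_floor_eq {f : ℝ → ℝ} {z : ℝ} (hf : ContinuousAt f z)
    (hz : Int.fract (f z) ≠ 0) : ∀ᶠ y in 𝓝 z, ⌊f y⌋ = ⌊f z⌋ := by
  have hfract : 0 < f z - ⌊f z⌋ := (Int.fract_nonneg (f z)).lt_of_ne' hz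
  have hmem : f z ∈ Set.Ioo (⌊f z⌋ : ℝ) (⌊f z⌋ + 1) :=
    ⟨by linarith, Int.lt_floor_add_one _⟩
  filter_upwards [hf.eventually (isOpen_Ioo.mem_nhds hmem)] with y hy
  exact Int.floor_eq_iff.mpr ⟨hy.1.le, hy.2⟩

section Continuity

variable {β x : ℝ}

theorem continuousAt_negBetaT (h : Int.fract (-β * x + β / (β + 1)) ≠ 0) :
    ContinuousAt (negBetaT β) x := by
  have hev : negBetaT β =ᶠ[𝓝 x] fun y => -β * y - ⌊-β * x + β / (β + 1)⌋ := by
    filter_upwards [eventually_floor_eq (f := fun y => -β * y + β / (β + 1)) (by fun_prop) h]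
      with y hy
    rw [negBetaT, hy]
  exact (continuousAt_congr hev).mpr (by fun_prop)

theorem continuousAt_iterate_negBetaT {n : ℕ}
    (h : ∀ j < n, Int.fract (-β * (negBetaT β)^[j] x + β / (β + 1)) ≠ 0) :
    ContinuousAt (negBetaT β)^[n] x := by
  induction n with
  | zero => exact continuousAt_id
  | succ n ih =>
    rw [Function.iterate_succ']
    exact (continuousAt_negBetaT (h n n.lt_succ_self)).comp (ih fun j hj => h j (by omega))

theorem eventually_negBetaDigit_eq {n : ℕ}
    (h : ∀ j < n, Int.fract (-β * (negBetaT β)^[j] x + β / (β + 1)) ≠ 0) :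
    ∀ᶠ y in 𝓝 x, ∀ j < n, negBetaDigit β y j = negBetaDigit β x j := by
  have hall : ∀ j ∈ Finset.range n, ∀ᶠ y in 𝓝 x, negBetaDigit β y j = negBetaDigit β x j := by
    intro j hj
    rw [Finset.mem_range] at hj
    have hcont := continuousAt_iterate_negBetaT fun i (hi : i < j) => h i (by omega)
    exact eventually_floor_eq ((hcont.const_mul (-β)).add continuousAt_const) (h j hj)
  simpa only [Finset.mem_range] using (Filter.eventually_all_finset _).mpr hall

theorem exists_gt_negBetaDigit_eq (hx : x ∈ negBetaInterval β) {n : ℕ}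
    (h : ∀ j < n, Int.fract (-β * (negBetaT β)^[j] x + β / (β + 1)) ≠ 0) :
    ∃ y ∈ negBetaInterval β, x < y ∧ ∀ j < n, negBetaDigit β y j = negBetaDigit β x j := by
  obtain ⟨y, ⟨hy, hdig⟩, hxy⟩ := (((eventually_lt_nhds hx.2).and
    (eventually_negBetaDigit_eq h)).filter_mono nhdsWithin_le_nhds |>.and
    (self_mem_nhdsWithin (s := Set.Ioi x))).exists
  exact ⟨y, ⟨hx.1.trans hxy.le, hy⟩, hxy, hdig⟩

end Continuity

section Shift

variable {β : ℝ}

theorem dstar_periodic_of_odd_period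
    (h : ∃ p : ℕ, 0 < p ∧ Odd p ∧ ∀ i, dmb β (i + p) = dmb β i) :
    ∃ q, Even q ∧ 0 < q ∧ Function.Periodic (dstar β) q := by
  refine ⟨Nat.find h + 1, (Nat.find_spec h).2.1.add_one, Nat.succ_pos _, fun n => ?_⟩
  simp only [dstar, dif_pos h, Nat.add_mod_right]

theorem dstar_eq_of_no_odd_period
    (h : ¬ ∃ p : ℕ, 0 < p ∧ Odd p ∧ ∀ i, dmb β (i + p) = dmb β i) :
    dstar β = fun n => if n = 0 then 0 else dmb β (n - 1) := by
  simp only [dstar, dif_neg h]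

theorem negBetaShift_eq_inter (β : ℝ) :
    negBetaShift β = fullShift ⌊β⌋ ∩ {w | ∀ n, AltLe (dmb β) (shiftSeq w n)} ∩
      {w | ∀ n, AltLe (shiftSeq w n) (dstar β)} := by
  ext w
  simp only [negBetaShift, fullShift, Set.mem_inter_iff, Set.mem_ofPred_eq, forall_and, and_assoc]

/-- With `d* = 0d`, a first difference with `d*` at position `k + 1` is one with `d` at `k`,
one position later and of the opposite sign. -/
theorem altLe_dstar_of_forall_dmb_altLe
    (h : ¬ ∃ p : ℕ, 0 < p ∧ Odd p ∧ ∀ i, dmb β (i + p) = dmb β i) {w : ℤ → ℤ}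
    (hw : ∀ i, 0 ≤ w i) (hlow : ∀ n, AltLe (dmb β) (shiftSeq w n)) (n : ℤ) :
    AltLe (shiftSeq w n) (dstar β) := by
  rw [dstar_eq_of_no_odd_period h, altLe_iff_not_altLt]
  rintro ⟨k, hk⟩
  cases k with
  | zero =>
    have := hk.2
    simp only [shiftSeq, if_true, zero_add, pow_one] at this
    linarith [hw (n + (0 : ℕ))]
  | succ k =>
    obtain ⟨-, hk⟩ := (altLtAt_add_iff_of_odd odd_one).mp hk
    refine altLe_iff_not_altLt.mp (hlow (n + 1)) (altLt_iff_exists_altLtAt.mpr ⟨k, ?_⟩)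
    simpa only [shiftSeq_add, Nat.cast_one, Nat.add_one_ne_zero, if_false,
      Nat.add_sub_cancel] using hk

theorem negBetaShift_eq_of_no_odd_period
    (h : ¬ ∃ p : ℕ, 0 < p ∧ Odd p ∧ ∀ i, dmb β (i + p) = dmb β i) :
    negBetaShift β = fullShift ⌊β⌋ ∩ {w | ∀ n, AltLe (dmb β) (shiftSeq w n)} := by
  rw [negBetaShift_eq_inter]
  exact Set.inter_eq_left.mpr fun w hw =>
    altLe_dstar_of_forall_dmb_altLe h (fun i => (hw.1 i).1) hw.2

theorem isSubshiftOfFiniteType_negBetaShift {p : ℕ} (hp : 0 < p)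
    (hper : Function.Periodic (dmb β) p) : IsSubshiftOfFiniteType ⌊β⌋ (negBetaShift β) := by
  have hlow : IsSubshiftOfFiniteType ⌊β⌋
      (fullShift ⌊β⌋ ∩ {w | ∀ n, AltLe (dmb β) (shiftSeq w n)}) :=
    isSubshiftOfFiniteType_altLe_left (even_two_mul p) (by omega) (by simpa using hper.nat_mul 2)
  by_cases hodd : ∃ p : ℕ, 0 < p ∧ Odd p ∧ ∀ i, dmb β (i + p) = dmb β i
  · obtain ⟨q, hq, hq0, hqper⟩ := dstar_periodic_of_odd_period hodd
    rw [negBetaShift_eq_inter]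
    exact hlow.inter (isSubshiftOfFiniteType_altLe_right hq hq0 hqper)
  · rw [negBetaShift_eq_of_no_odd_period hodd]
    exact hlow

end Shift

def zeroPad (u : ℕ → ℤ) : ℤ → ℤ := fun n => if n < 0 then 0 else u n.toNat

theorem shiftSeq_zeroPad_natCast (u : ℕ → ℤ) (m : ℕ) :
    shiftSeq (zeroPad u) m = fun i => u (i + m) := by
  funext i
  simp only [shiftSeq, zeroPad]
  rw [if_neg (by omega)]
  congr 1
  omega

section NotPeriodic

variable {β : ℝ}

theorem zeroPad_negBetaDigit_mem (hβ : 1 < β) {x : ℝ} (hx : x ∈ negBetaInterval β) :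
    zeroPad (negBetaDigit β x) ∈
      fullShift ⌊β⌋ ∩ {w | ∀ n, AltLe (dmb β) (shiftSeq w n)} := by
  have hβ0 : 0 < β := by linarith
  have hfloor : 1 ≤ ⌊β⌋ := Int.le_floor.mpr (by exact_mod_cast hβ.le)
  refine ⟨fun n => ?_, fun n => ?_⟩
  · unfold zeroPad
    split_ifs
    · exact ⟨le_rfl, by omega⟩
    · exact negBetaDigit_nonneg_and_le_floor hβ0 hx _
  · rcases lt_or_ge n 0 with hn | hn
    · refine Or.inr (altLt_iff_exists_altLtAt.mpr ⟨0, nofun, ?_⟩)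
      simp only [shiftSeq, zeroPad, dmb_zero (by positivity : β + 1 ≠ 0)]
      rw [if_pos (by omega), zero_add, pow_one, sub_zero]
      linarith
    · lift n to ℕ using hn
      rw [shiftSeq_zeroPad_natCast]
      simp_rw [negBetaDigit_add]
      exact dmb_altLe_negBetaDigit hβ (iterate_negBetaT_mem (by positivity) hx n)

theorem dmb_periodic_of_iterate_eq {t : ℕ}
    (h : (negBetaT β)^[t] (-β / (β + 1)) = -β / (β + 1)) : Function.Periodic (dmb β) t :=
  fun i => by rw [dmb, negBetaDigit_add, h]

theorem fract_ne_zero_of_not_periodic (hnp : ¬ ∃ p, 0 < p ∧ Function.Periodic (dmb β) p)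
    (j : ℕ) : Int.fract (-β * (negBetaT β)^[j] (-β / (β + 1)) + β / (β + 1)) ≠ 0 := fun h =>
  hnp ⟨j + 1, j.succ_pos, dmb_periodic_of_iterate_eq (by
    rw [Function.iterate_succ_apply', negBetaT_eq_fract, h, zero_sub, neg_div])⟩

theorem zeroPad_splice_mem (hβ : 1 < β)
    (hno : ¬ ∃ p : ℕ, 0 < p ∧ Odd p ∧ ∀ i, dmb β (i + p) = dmb β i) {X : Finset (List ℤ)}
    (hX : negBetaShift β = fullShift ⌊β⌋ ∩ {w | ∀ u ∈ X, ¬ IsFactorOf u w}) {x y : ℝ}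
    (hx : x ∈ negBetaInterval β) (hy : y ∈ negBetaInterval β) (K : ℕ)
    (hdig : ∀ j < X.sup List.length,
      negBetaDigit β y j = negBetaDigit β ((negBetaT β)^[K] x) j) :
    zeroPad (fun i => if i < K then negBetaDigit β x i else negBetaDigit β y (i - K)) ∈
      negBetaShift β := by
  have hmem : ∀ {x}, x ∈ negBetaInterval β → zeroPad (negBetaDigit β x) ∈ negBetaShift β :=
    fun hx => negBetaShift_eq_of_no_odd_period hno ▸ zeroPad_negBetaDigit_mem hβ hx
  refine mem_of_eq_left_of_eq_right hX (fun u hu => Finset.le_sup hu) (hmem hx) (hmem hy) K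
    (fun n hn => ?_) (fun n hn => ?_)
  · simp only [zeroPad]
    split_ifs
    · rfl
    · rfl
    · rw [hdig (n.toNat - K) (by omega), ← negBetaDigit_add, Nat.sub_add_cancel (by omega)]
  · simp only [zeroPad]
    rw [if_neg (by omega), if_neg (by omega), if_neg (by omega)]
    congr 1
    omega

theorem periodic_of_isSubshiftOfFiniteType (hβ : 1 < β)
    (hS : IsSubshiftOfFiniteType ⌊β⌋ (negBetaShift β)) :
    ∃ p, 0 < p ∧ Function.Periodic (dmb β) p := by
  by_contra hnp
  have hno : ¬ ∃ p : ℕ, 0 < p ∧ Odd p ∧ ∀ i, dmb β (i + p) = dmb β i :=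
    fun ⟨p, hp, _, hper⟩ => hnp ⟨p, hp, hper⟩
  obtain ⟨X, hX⟩ := hS
  set K := 2 * X.sup List.length + 1
  have hx₀ : -β / (β + 1) ∈ negBetaInterval β :=
    ⟨le_rfl, div_lt_div_of_pos_right (by linarith) (by linarith)⟩
  have hz := iterate_negBetaT_mem (by positivity) hx₀ K
  obtain ⟨y, hy, hzy, hdig⟩ := exists_gt_negBetaDigit_eq hz fun j _ => by
    rw [← Function.iterate_add_apply]; exact fract_ne_zero_of_not_periodic hnp _
  obtain ⟨r, hr⟩ := exists_altLtAt_negBetaDigit_of_lt hβ hz hy hzy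
  have hg := zeroPad_splice_mem hβ hno hX hx₀ hy K hdig
  set g : ℕ → ℤ :=
    fun i => if i < K then negBetaDigit β (-β / (β + 1)) i else negBetaDigit β y (i - K)
  have hgK : (fun i => g (i + K)) = negBetaDigit β y := funext fun i => by simp [g]
  have hdK : (fun i => dmb β (i + K)) = negBetaDigit β ((negBetaT β)^[K] (-β / (β + 1))) :=
    funext fun i => negBetaDigit_add β _ i K
  have hlt : AltLtAt g (dmb β) (r + K) := (altLtAt_add_iff_of_odd (odd_two_mul_add_one _)).mpr
    ⟨fun i hi => if_pos hi, by rw [hgK, hdK]; exact hr⟩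
  have hg0 : shiftSeq (zeroPad g) 0 = g := by simpa using shiftSeq_zeroPad_natCast g 0
  rw [negBetaShift_eq_of_no_odd_period hno] at hg
  exact altLe_iff_not_altLt.mp (hg.2 0) (altLt_iff_exists_altLtAt.mpr ⟨r + K, by rwa [hg0]⟩)

end NotPeriodic

/-- The (-β)-shift is a subshift of finite type (the set of bi-infinite words over
`A_{-β}` avoiding some finite set `X` of finite words) if and only if
`d_{-β}(-β/(β+1))` is purely periodic. -/
theorem negBetaShift_finiteType_iff_purely_periodic (β : ℝ) (hβ : 1 < β) :
    (∃ X : Finset (List ℤ),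
        negBetaShift β =
          {w | (∀ i, 0 ≤ w i ∧ w i ≤ ⌊β⌋) ∧ ∀ u ∈ X, ¬ IsFactorOf u w}) ↔
      ∃ p : ℕ, 0 < p ∧ ∀ i, dmb β (i + p) = dmb β i :=
  ⟨periodic_of_isSubshiftOfFiniteType hβ,
    fun ⟨_, hp, hper⟩ => isSubshiftOfFiniteType_negBetaShift hp hper⟩
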